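/- Let h : G ↷ H be an actor between étale groupoids with anchor ρ : H → G⁽⁰⁾. Suppose G is effective (the interior of the isotropy equals the unit space) and ρ is an open map. Then h is free: for every unit t ∈ H⁽⁰⁾ and every γ ∈ G with s(γ) = ρ(t), the equation γ·t = t implies γ ∈ G⁽⁰⁾. -/

import Mathlib

open Topology

/-- A topological groupoid: a set with a partially defined multiplication
(`D a b` expresses composability), an inversion, satisfying the groupoid
axioms, such that inversion is continuous and multiplication is continuous
on the set of composable pairs. -/
structure TopGroupoid (G : Type*) [TopologicalSpace G] where
  /-- composability -/
  D : G → G → Prop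
  /-- partially defined multiplication (junk values off `D`) -/
  comp : G → G → G
  /-- inversion -/
  inv : G → G
  inv_inv : ∀ g, inv (inv g) = g
  d_inv : ∀ g, D g (inv g)
  d_eq : ∀ a b, D a b ↔ comp (inv a) a = comp b (inv b)
  d_comp_left : ∀ {a b c}, D a b → D b c → D (comp a b) c
  d_comp_right : ∀ {a b c}, D a b → D b c → D a (comp b c)
  assoc : ∀ {a b c}, D a b → D b c → comp (comp a b) c = comp a (comp b c)
  cancel_left : ∀ {g h}, D g h → comp (inv g) (comp g h) = h
  cancel_right : ∀ {g h}, D g h → comp (comp g h) (inv h) = g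
  continuous_inv : Continuous inv
  continuousOn_comp : ContinuousOn (fun p : G × G => comp p.1 p.2) {p | D p.1 p.2}

namespace TopGroupoid

variable {G : Type*} [TopologicalSpace G]

/-- The source map `s(γ) = γ⁻¹γ`. -/
def src (S : TopGroupoid G) (g : G) : G := S.comp (S.inv g) g

/-- The range map `r(γ) = γγ⁻¹`. -/
def rng (S : TopGroupoid G) (g : G) : G := S.comp g (S.inv g)

/-- The unit space `G⁽⁰⁾ = {γ⁻¹γ : γ ∈ G}`. -/
def unitSpace (S : TopGroupoid G) : Set G := Set.range S.src

/-- A groupoid is étale if its range map is a local homeomorphism. -/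
def IsEtale (S : TopGroupoid G) : Prop := IsLocalHomeomorph S.rng

/-- An open bisection: an open set on which both the source and the range map
are injective (hence, in an étale groupoid, restrict to homeomorphisms onto
their open images). -/
def IsOpenBisection (S : TopGroupoid G) (U : Set G) : Prop :=
  IsOpen U ∧ Set.InjOn S.src U ∧ Set.InjOn S.rng U

/-- Pointwise product of subsets: `U·V = {γη : γ ∈ U, η ∈ V, s γ = r η}`. -/
def setMul (S : TopGroupoid G) (U V : Set G) : Set G :=
  {g | ∃ a ∈ U, ∃ b ∈ V, S.D a b ∧ g = S.comp a b}

/-- Pointwise inverse of a subset: `U⁻¹ = {γ⁻¹ : γ ∈ U}`. -/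
def setInv (S : TopGroupoid G) (U : Set G) : Set G := S.inv '' U

end TopGroupoid

/-- An actor `G ↷ H`: a continuous left action of `G` on `H` (with anchor map
`ρ : H → G⁽⁰⁾`) which commutes with the right multiplication of `H` on itself. -/
structure Actor {G : Type*} {H : Type*} [TopologicalSpace G] [TopologicalSpace H]
    (S : TopGroupoid G) (T : TopGroupoid H) where
  /-- the anchor map -/
  rho : H → G
  /-- the action multiplication, partially defined (junk off `s γ = ρ x`) -/
  act : G → H → H
  rho_mem : ∀ x, rho x ∈ S.unitSpace
  continuous_rho : Continuous rho
  continuousOn_act :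
    ContinuousOn (fun p : G × H => act p.1 p.2) {p | S.src p.1 = rho p.2}
  rho_act : ∀ {γ x}, S.src γ = rho x → rho (act γ x) = S.rng γ
  act_assoc : ∀ {γ₁ γ₂ x}, S.D γ₁ γ₂ → S.src γ₂ = rho x →
      act γ₁ (act γ₂ x) = act (S.comp γ₁ γ₂) x
  act_unit : ∀ x, act (rho x) x = x
  rho_comp : ∀ {x y}, T.D x y → rho (T.comp x y) = rho x
  src_act : ∀ {γ x}, S.src γ = rho x → T.src (act γ x) = T.src x
  act_right : ∀ {γ x y}, S.src γ = rho x → T.D x y →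
      act γ (T.comp x y) = T.comp (act γ x) y

namespace Actor

variable {G H : Type*} [TopologicalSpace G] [TopologicalSpace H]
variable {S : TopGroupoid G} {T : TopGroupoid H}

/-- An actor is free if the only arrows fixing a unit are units. -/
def Free (A : Actor S T) : Prop :=
  ∀ t ∈ T.unitSpace, ∀ γ : G, S.src γ = A.rho t → A.act γ t = t → γ ∈ S.unitSpace

/-- An actor is proper if the anchor map restricted to the unit space of `H`
is a proper map. -/
def Proper (A : Actor S T) : Prop := IsProperMap (T.unitSpace.restrict A.rho)

/-- `U·V = {γ·x : γ ∈ U, x ∈ V, s γ = ρ x}`. -/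
def actSet (A : Actor S T) (U : Set G) (V : Set H) : Set H :=
  {y | ∃ γ ∈ U, ∃ x ∈ V, S.src γ = A.rho x ∧ y = A.act γ x}

end Actor


open Topology

/-! A unit `t` of `H` fixed by `γ` has, by continuity of the action and openness of `H⁽⁰⁾`,
a neighbourhood of units `x` such that every `g` near `γ` with `s g = ρ x` sends `x` to a unit
`g·x`; as `s (g·x) = s x = x`, this forces `g·x = x`, hence `r g = ρ (g·x) = ρ x = s g`.
Since `ρ` is open, the arrows `g` near `γ` for which such an `x` exists form a neighbourhood
of `γ`, so `γ` lies in the interior of the isotropy, which is `G⁽⁰⁾` by effectiveness. -/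

namespace TopGroupoid

variable {G : Type*} [TopologicalSpace G] (S : TopGroupoid G)

def isotropy : Set G := {γ | S.rng γ = S.src γ}

lemma d_inv_self (g : G) : S.D (S.inv g) g := by
  simpa only [S.inv_inv] using S.d_inv (S.inv g)

lemma src_src (g : G) : S.src (S.src g) = S.src g := by
  have h := (S.d_eq (S.src g) (S.inv g)).mp (S.d_comp_left (S.d_inv_self g) (S.d_inv g))
  rwa [S.inv_inv] at h

lemma src_of_mem_unitSpace {u : G} (hu : u ∈ S.unitSpace) : S.src u = u := by
  obtain ⟨g, rfl⟩ := hu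
  exact S.src_src g

lemma src_inv (g : G) : S.src (S.inv g) = S.rng g := by
  simp only [src, rng, S.inv_inv]

lemma range_rng : Set.range S.rng = S.unitSpace := by
  ext u
  constructor
  · rintro ⟨g, rfl⟩
    exact ⟨S.inv g, S.src_inv g⟩
  · rintro ⟨g, rfl⟩
    exact ⟨S.inv g, by simp only [rng, src, S.inv_inv]⟩

lemma continuous_src : Continuous S.src :=
  S.continuousOn_comp.comp_continuous (S.continuous_inv.prodMk continuous_id) S.d_inv_self

variable {S} in
lemma IsEtale.isOpen_unitSpace (hS : S.IsEtale) : IsOpen S.unitSpace :=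
  S.range_rng ▸ hS.isOpenMap.isOpen_range

end TopGroupoid

namespace Actor

variable {G H : Type*} [TopologicalSpace G] [TopologicalSpace H]
variable {S : TopGroupoid G} {T : TopGroupoid H} (A : Actor S T)

lemma act_eq_self_of_mem_unitSpace {γ : G} {x : H} (hγx : S.src γ = A.rho x)
    (hx : x ∈ T.unitSpace) (hγx_unit : A.act γ x ∈ T.unitSpace) : A.act γ x = x := by
  calc A.act γ x = T.src (A.act γ x) := (T.src_of_mem_unitSpace hγx_unit).symm
    _ = T.src x := A.src_act hγx
    _ = x := T.src_of_mem_unitSpace hx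

lemma mem_isotropy_of_act_eq_self {γ : G} {x : H} (hγx : S.src γ = A.rho x)
    (hfix : A.act γ x = x) : γ ∈ S.isotropy := by
  show S.rng γ = S.src γ
  rw [← A.rho_act hγx, hfix, hγx]

lemma exists_nhds_act_mem {γ : G} {t : H} (hγt : S.src γ = A.rho t) {U : Set H}
    (hU : U ∈ 𝓝 (A.act γ t)) :
    ∃ O ∈ 𝓝 γ, ∃ V ∈ 𝓝 t, ∀ g ∈ O, ∀ x ∈ V, S.src g = A.rho x → A.act g x ∈ U := by
  obtain ⟨N, hN, hNU⟩ := mem_nhdsWithin_iff_exists_mem_nhds_inter.mp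
    ((A.continuousOn_act (γ, t) hγt).preimage_mem_nhdsWithin hU)
  obtain ⟨O, hO, V, hV, hOV⟩ := mem_nhds_prod_iff.mp hN
  exact ⟨O, hO, V, hV, fun g hg x hx hgx => @hNU (g, x) ⟨hOV ⟨hg, hx⟩, hgx⟩⟩

lemma isotropy_mem_nhds_of_act_eq_self (hunits : IsOpen T.unitSpace) (hopen : IsOpenMap A.rho)
    {γ : G} {t : H} (ht : t ∈ T.unitSpace) (hγt : S.src γ = A.rho t) (hfix : A.act γ t = t) :
    S.isotropy ∈ 𝓝 γ := by
  obtain ⟨O, hO, V, hV, hact⟩ :=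
    A.exists_nhds_act_mem hγt (by rw [hfix]; exact hunits.mem_nhds ht)
  have hρV : A.rho '' (V ∩ T.unitSpace) ∈ 𝓝 (S.src γ) :=
    hγt ▸ hopen.image_mem_nhds (Filter.inter_mem hV (hunits.mem_nhds ht))
  refine Filter.mem_of_superset
    (Filter.inter_mem hO (S.continuous_src.continuousAt.preimage_mem_nhds hρV)) ?_
  rintro g ⟨hg, x, ⟨hxV, hx⟩, hxg⟩
  have hgx : S.src g = A.rho x := hxg.symm
  exact A.mem_isotropy_of_act_eq_self hgx
    (A.act_eq_self_of_mem_unitSpace hgx hx (hact g hg x hxV hgx))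

end Actor

theorem actor_free_of_effective_open_anchor_general {G H : Type*} [TopologicalSpace G]
    [TopologicalSpace H] {S : TopGroupoid G} {T : TopGroupoid H}
    (hT : T.IsEtale) (A : Actor S T)
    (heff : interior {γ : G | S.rng γ = S.src γ} = S.unitSpace)
    (hopen : IsOpenMap A.rho) :
    A.Free := by
  intro t ht γ hγt hfix
  rw [← heff]
  exact mem_interior_iff_mem_nhds.mpr
    (A.isotropy_mem_nhds_of_act_eq_self hT.isOpen_unitSpace hopen ht hγt hfix)

/-- If `G` is effective (the interior of the isotropy is the unit space) and
the anchor map of an actor `h : G ↷ H` between étale groupoids is open, then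
the actor is free. -/
theorem actor_free_of_effective_open_anchor {G H : Type*} [TopologicalSpace G]
    [TopologicalSpace H] {S : TopGroupoid G} {T : TopGroupoid H}
    (hS : S.IsEtale) (hT : T.IsEtale) (A : Actor S T)
    (heff : interior {γ : G | S.rng γ = S.src γ} = S.unitSpace)
    (hopen : IsOpenMap A.rho) :
    A.Free :=
  actor_free_of_effective_open_anchor_general hT A heff hopen
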